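/- arXiv:1710.03193 — 5 statements merged into one kernel-verified Lean document; each statement's English description precedes it below -/
import Mathlib

section
/- Let F be a non-abelian free group, let Δ be a decomposition of F, let φ : F → ℝ be a Δ-decomposable quasimorphism and let ψ : F → ℝ be a Δ-continuous symmetric quasimorphism. Then the cup product class [δ¹φ] ⌣ [δ¹ψ] ∈ H⁴_b(F,ℝ) is trivial; concretely, there exists a bounded function β : F³ → ℝ such that δ³β(g₁,g₂,g₃,g₄) = δ¹φ(g₁,g₂)·δ¹ψ(g₃,g₄) for all g₁,g₂,g₃,g₄ ∈ F. -/
/-! Common definitions: free groups, reduced products, (bounded) cochains,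
decompositions of a free group, Brooks and Rolli quasimorphisms. -/

section Preamble

variable {α : Type} [DecidableEq α]

/-- Word length of an element of a free group (length of its reduced word). -/
def wlen (g : FreeGroup α) : ℕ := g.toWord.length

/-- A product `g = g₁ ⋯ g_k` is reduced (no cancellation) if the word lengths add up. -/
def ReducedProd (l : List (FreeGroup α)) : Prop :=
  wlen l.prod = (l.map wlen).sum

/-- Inhomogeneous coboundary `δ¹φ(g,h) = φ(g) + φ(h) − φ(gh)`. -/
def d1 (φ : FreeGroup α → ℝ) (g h : FreeGroup α) : ℝ := φ g + φ h - φ (g * h)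

/-- Inhomogeneous coboundary `δ²η`. -/
def d2 (η : FreeGroup α → FreeGroup α → ℝ) (g h i : FreeGroup α) : ℝ :=
  η h i - η (g * h) i + η g (h * i) - η g h

/-- Inhomogeneous coboundary `δ³β`. -/
def d3 (β : FreeGroup α → FreeGroup α → FreeGroup α → ℝ) (g h i j : FreeGroup α) : ℝ :=
  β h i j - β (g * h) i j + β g (h * i) j - β g h (i * j) + β g h i

/-- A quasimorphism on the free group. -/
def IsQuasimorphism (φ : FreeGroup α → ℝ) : Prop :=
  ∃ D > (0 : ℝ), ∀ g h : FreeGroup α, |d1 φ g h| < D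

/-- A symmetric map: `φ(g⁻¹) = −φ(g)`. -/
def IsSymmetricMap (φ : FreeGroup α → ℝ) : Prop :=
  ∀ g : FreeGroup α, φ g⁻¹ = -φ g

/-- Longest common initial sequence of two lists. -/
def commonPrefix {β : Type} [DecidableEq β] : List β → List β → List β
  | a :: as, b :: bs => if a = b then a :: commonPrefix as bs else []
  | _, _ => []

/-- Reversed, entrywise-inverted list: `(g₁, …, g_k) ↦ (g_k⁻¹, …, g₁⁻¹)`. -/
def seqInv (l : List (FreeGroup α)) : List (FreeGroup α) :=
  (l.map fun x => x⁻¹).reverse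

/-- `(c̲₁⁻¹)`: the common initial sequence of `Δ(g)` and `Δ(gh)`. -/
def cSeq1 (D : FreeGroup α → List (FreeGroup α)) (g h : FreeGroup α) : List (FreeGroup α) :=
  commonPrefix (D g) (D (g * h))

/-- `(c̲₂⁻¹)`: the common initial sequence of `Δ(g⁻¹)` and `Δ(h)`. -/
def cSeq2 (D : FreeGroup α → List (FreeGroup α)) (g h : FreeGroup α) : List (FreeGroup α) :=
  commonPrefix (D g⁻¹) (D h)

/-- `(c̲₃⁻¹)`: the common initial sequence of `Δ(h⁻¹)` and `Δ(h⁻¹g⁻¹)`. -/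
def cSeq3 (D : FreeGroup α → List (FreeGroup α)) (g h : FreeGroup α) : List (FreeGroup α) :=
  commonPrefix (D h⁻¹) (D (h⁻¹ * g⁻¹))

/-- `(r̲₁)`: middle part of `Δ(g) = (c̲₁⁻¹)·(r̲₁)·(c̲₂)`. -/
def rSeq1 (D : FreeGroup α → List (FreeGroup α)) (g h : FreeGroup α) : List (FreeGroup α) :=
  ((D g).drop (cSeq1 D g h).length).take
    ((D g).length - (cSeq1 D g h).length - (cSeq2 D g h).length)

/-- `(r̲₂)`: middle part of `Δ(h) = (c̲₂⁻¹)·(r̲₂)·(c̲₃)`. -/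
def rSeq2 (D : FreeGroup α → List (FreeGroup α)) (g h : FreeGroup α) : List (FreeGroup α) :=
  ((D h).drop (cSeq2 D g h).length).take
    ((D h).length - (cSeq2 D g h).length - (cSeq3 D g h).length)

/-- `(r̲₃)`: middle part of `Δ(h⁻¹g⁻¹) = (c̲₃⁻¹)·(r̲₃)·(c̲₁)`. -/
def rSeq3 (D : FreeGroup α → List (FreeGroup α)) (g h : FreeGroup α) : List (FreeGroup α) :=
  ((D (h⁻¹ * g⁻¹)).drop (cSeq3 D g h).length).take
    ((D (h⁻¹ * g⁻¹)).length - (cSeq3 D g h).length - (cSeq1 D g h).length)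

/-- A decomposition `Δ` of the free group `F` into pieces `P` (Definition 3.1). -/
structure Decomp (α : Type) [DecidableEq α] where
  /-- the set of pieces -/
  pieces : Set (FreeGroup α)
  /-- the decomposition map `Δ` -/
  D : FreeGroup α → List (FreeGroup α)
  /-- the uniform bound `R` on the r-parts of `Δ`-triangles -/
  R : ℕ
  R_pos : 0 < R
  pieces_symm : ∀ p ∈ pieces, p⁻¹ ∈ pieces
  one_notin_pieces : (1 : FreeGroup α) ∉ pieces
  mem_pieces : ∀ g : FreeGroup α, ∀ p ∈ D g, p ∈ pieces
  prod_eq : ∀ g : FreeGroup α, (D g).prod = g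
  reduced : ∀ g : FreeGroup α, ReducedProd (D g)
  inv_eq : ∀ g : FreeGroup α, D g⁻¹ = seqInv (D g)
  infix_closed : ∀ (g : FreeGroup α) (l₁ l₂ l₃ : List (FreeGroup α)),
    D g = l₁ ++ l₂ ++ l₃ → D l₂.prod = l₂
  triangle₁ : ∀ g h : FreeGroup α, D g = cSeq1 D g h ++ rSeq1 D g h ++ seqInv (cSeq2 D g h)
  triangle₂ : ∀ g h : FreeGroup α, D h = cSeq2 D g h ++ rSeq2 D g h ++ seqInv (cSeq3 D g h)
  triangle₃ : ∀ g h : FreeGroup α,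
    D (h⁻¹ * g⁻¹) = cSeq3 D g h ++ rSeq3 D g h ++ seqInv (cSeq1 D g h)
  rBound₁ : ∀ g h : FreeGroup α, (rSeq1 D g h).length ≤ R
  rBound₂ : ∀ g h : FreeGroup α, (rSeq2 D g h).length ≤ R
  rBound₃ : ∀ g h : FreeGroup α, (rSeq3 D g h).length ≤ R

/-- The `Δ`-decomposable map `φ_{λ,Δ}(g) = Σ_j λ(g_j)`. -/
def decQM (D : FreeGroup α → List (FreeGroup α)) (lam : FreeGroup α → ℝ)
    (g : FreeGroup α) : ℝ :=
  ((D g).map lam).sum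

/-- `φ` is a `Δ`-decomposable quasimorphism (Definition 3.8). -/
def IsDecomposable (dec : Decomp α) (φ : FreeGroup α → ℝ) : Prop :=
  ∃ lam : FreeGroup α → ℝ,
    (∃ B : ℝ, ∀ p ∈ dec.pieces, |lam p| ≤ B) ∧
    (∀ p ∈ dec.pieces, lam p⁻¹ = -lam p) ∧
    φ = decQM dec.D lam

/-- Agreement (as an extended natural number) of two sequences:
`⊤` if they are equal, otherwise the length of their common initial sequence. -/
def seqAgree {β : Type} [DecidableEq β] (l l' : List β) : ℕ∞ :=
  if l = l' then ⊤ else ((commonPrefix l l').length : ℕ∞)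

/-- The quantity `N_Δ((g,h),(g',h'))` measuring how much the `Δ`-triangles of the two
pairs agree around their centres. -/
noncomputable def NDelta (D : FreeGroup α → List (FreeGroup α))
    (p q : FreeGroup α × FreeGroup α) : ℕ∞ :=
  if p = q then ⊤
  else if rSeq1 D p.1 p.2 = rSeq1 D q.1 q.2 ∧ rSeq2 D p.1 p.2 = rSeq2 D q.1 q.2 ∧
            rSeq3 D p.1 p.2 = rSeq3 D q.1 q.2 then
    min (seqAgree (seqInv (cSeq1 D p.1 p.2)) (seqInv (cSeq1 D q.1 q.2)))
      (min (seqAgree (seqInv (cSeq2 D p.1 p.2)) (seqInv (cSeq2 D q.1 q.2)))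
        (seqAgree (seqInv (cSeq3 D p.1 p.2)) (seqInv (cSeq3 D q.1 q.2))))
  else 0

/-- A bounded symmetric `2`-cocycle `ω` is `Δ`-continuous (Definition 3.12). -/
def DeltaContinuousCocycle (D : FreeGroup α → List (FreeGroup α))
    (ω : FreeGroup α → FreeGroup α → ℝ) : Prop :=
  ∃ s : ℕ → ℝ, (∀ j, 0 ≤ s j) ∧ Summable s ∧
    ∀ p q : FreeGroup α × FreeGroup α, p ≠ q → ∀ N : ℕ, NDelta D p q = (N : ℕ∞) →
      |ω p.1 p.2 - ω q.1 q.2| ≤ s N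

/-- A quasimorphism `ψ` is `Δ`-continuous: it is symmetric and `δ¹ψ` is `Δ`-continuous. -/
def DeltaContinuousQM (D : FreeGroup α → List (FreeGroup α)) (ψ : FreeGroup α → ℝ) : Prop :=
  IsSymmetricMap ψ ∧ IsQuasimorphism ψ ∧ DeltaContinuousCocycle D (d1 ψ)

/-- `ζ`-type sums: `zetaL A (g₁,…,g_k) g' h = Σ_j A(g_j, g_{j+1}⋯g_k·g', h)`. -/
def zetaL (A : FreeGroup α → FreeGroup α → FreeGroup α → ℝ) :
    List (FreeGroup α) → FreeGroup α → FreeGroup α → ℝ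
  | [], _, _ => 0
  | p :: rest, g', h => A p (rest.prod * g') h + zetaL A rest g' h

/-- `ζ(g,g',h) = Σ_j φ(g_j)·ω(g_{j+1}⋯g_k·g', h)` for `Δ(g) = (g₁,…,g_k)`. -/
def zetaD (D : FreeGroup α → List (FreeGroup α)) (φ : FreeGroup α → ℝ)
    (ω : FreeGroup α → FreeGroup α → ℝ) (g g' h : FreeGroup α) : ℝ :=
  zetaL (fun p u v => φ p * ω u v) (D g) g' h

/-- `w` is a subword of `g` (as reduced words). -/
def Subword (w g : FreeGroup α) : Prop :=
  w.toWord <:+: g.toWord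

/-- `w` is non self-overlapping: there are no reduced words `x, y` with `x` nontrivial
such that `w = xyx` as a reduced word. -/
def NonSelfOverlapping (w : FreeGroup α) : Prop :=
  ¬∃ x y : FreeGroup α, x ≠ 1 ∧ w = x * y * x ∧ ReducedProd [x, y, x]

/-- `ν_w(g)`: the number of occurrences of `w` as a subword of the reduced word `g`. -/
def occCount (w g : FreeGroup α) : ℕ :=
  ((List.range (g.toWord.length + 1)).filter
    (fun s => decide ((g.toWord.drop s).take w.toWord.length = w.toWord))).length

/-- The Brooks counting function `φ_w = ν_w − ν_{w⁻¹}`. -/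
noncomputable def brooksQM (w : FreeGroup α) (g : FreeGroup α) : ℝ :=
  (occCount w g : ℝ) - (occCount w⁻¹ g : ℝ)

/-- `φ` is a Brooks counting quasimorphism on some non self-overlapping word. -/
def IsBrooksQM (φ : FreeGroup α → ℝ) : Prop :=
  ∃ w : FreeGroup α, NonSelfOverlapping w ∧ φ = brooksQM w

/-- The interleaved list `(u₁, w^{ε₁}, u₂, …, u_{k−1}, w^{ε_{k−1}}, u_k)` built from
`us = (u₁,…,u_k)` and signs `eps = (ε₁,…,ε_{k−1})`. -/
def wfacList (w : FreeGroup α) : List (FreeGroup α) → List Bool → List (FreeGroup α)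
  | [], _ => []
  | [u], _ => [u]
  | u :: us, [] => u :: wfacList w us []
  | u :: us, e :: eps => u :: (if e then w else w⁻¹) :: wfacList w us eps

/-- `RolliWord l` : `l = ((n₁,m₁),…,(n_k,m_k))` encodes the normal form
`x_{n₁}^{m₁} ⋯ x_{n_k}^{m_k}` (all `m_j ≠ 0`, no consecutive equal indices). -/
def RolliWord {n : ℕ} (l : List (Fin n × ℤ)) : Prop :=
  (∀ p ∈ l, p.2 ≠ 0) ∧ l.Chain' fun p q => p.1 ≠ q.1

/-- The element `x_{n₁}^{m₁} ⋯ x_{n_k}^{m_k}` encoded by `l`. -/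
def rolliProd {n : ℕ} (l : List (Fin n × ℤ)) : FreeGroup (Fin n) :=
  (l.map fun p => FreeGroup.of p.1 ^ p.2).prod

/-- `φ` is a Rolli quasimorphism. -/
def IsRolliQM {n : ℕ} (φ : FreeGroup (Fin n) → ℝ) : Prop :=
  ∃ lam : Fin n → ℤ → ℝ,
    (∀ j, ∃ B : ℝ, ∀ m : ℤ, |lam j m| ≤ B) ∧
    (∀ j m, lam j (-m) = -lam j m) ∧
    φ 1 = 0 ∧
    ∀ l : List (Fin n × ℤ), RolliWord l → φ (rolliProd l) = (l.map fun p => lam p.1 p.2).sum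

/-- The list of letters (as group elements) of the reduced word representing `g`. -/
def letters (g : FreeGroup α) : List (FreeGroup α) :=
  g.toWord.map fun p => FreeGroup.mk [p]

/-- `d` is the common 2-path of `(g,h)`: `g = t₁⁻¹d` and `h = d⁻¹t₂` as reduced words,
with the tripod condition that `gh = t₁⁻¹t₂` is also reduced. -/
def IsCommon2Path (g h d : FreeGroup α) : Prop :=
  ∃ t₁ t₂ : FreeGroup α, g = t₁⁻¹ * d ∧ h = d⁻¹ * t₂ ∧
    ReducedProd [t₁⁻¹, d] ∧ ReducedProd [d⁻¹, t₂] ∧ ReducedProd [t₁⁻¹, t₂]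

/-- Case (a) of the alignment of `g, h, i` (Figure 4a). -/
def Align3A (g h i : FreeGroup α) : Prop :=
  ∃ t₁ t₂ t₃ t₄ t₅ : FreeGroup α,
    g = t₁ * t₂ ∧ h = t₂⁻¹ * t₃ * t₄ ∧ i = t₄⁻¹ * t₅ ∧
    ReducedProd [t₁, t₂] ∧ ReducedProd [t₂⁻¹, t₃, t₄] ∧ ReducedProd [t₄⁻¹, t₅] ∧
    ReducedProd [t₁, t₃, t₅]

/-- Case (b) of the alignment of `g, h, i` (Figure 4b). -/
def Align3B (g h i : FreeGroup α) : Prop :=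
  ∃ t₁ t₂ t₃ t₄ t₅ : FreeGroup α,
    g = t₁ * t₂ * t₃ ∧ h = t₃⁻¹ * t₄ ∧ i = t₄⁻¹ * t₂⁻¹ * t₅ ∧
    ReducedProd [t₁, t₂, t₃] ∧ ReducedProd [t₃⁻¹, t₄] ∧ ReducedProd [t₄⁻¹, t₂⁻¹, t₅] ∧
    ReducedProd [t₁, t₅]

/-- Case (c) of the alignment of `g, h, i` (Figure 4c), with common 3-path `c`. -/
def Align3C (g h i c : FreeGroup α) : Prop :=
  ∃ t₁ t₂ t₃ t₄ : FreeGroup α,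
    g = t₁⁻¹ * c * t₂ ∧ h = t₂⁻¹ * c⁻¹ * t₃ ∧ i = t₃⁻¹ * c * t₄ ∧
    ReducedProd [t₁⁻¹, c, t₂] ∧ ReducedProd [t₂⁻¹, c⁻¹, t₃] ∧ ReducedProd [t₃⁻¹, c, t₄] ∧
    ReducedProd [t₁⁻¹, t₃] ∧ ReducedProd [t₂⁻¹, t₄]

/-- `c` is the common 3-path of `(g,h,i)`: `c` in case (c), the identity otherwise. -/
def IsCommon3Path (g h i c : FreeGroup α) : Prop :=
  Align3C g h i c ∨ (c = 1 ∧ (Align3A g h i ∨ Align3B g h i))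

end Preamble

/-! With `ω = δ¹ψ`, the cochain `φ ⌣ ω` has coboundary `δ¹φ ⌣ ω` but is unbounded. We correct
it by a coboundary `δ²η`, where `η(u, v)` pairs the weights `λ(u_j)` of the pieces of `Δ(u)` with
values of `ω` at the tails of `u`. By the cocycle identity, `(φ ⌣ ω + δ²η)(g, h, i)` becomes a
signed sum of such pairings along the three sides of the `Δ`-triangle of `(g, h)`. The legs
shared by two sides cancel, because averaging over both endpoints of each piece makes the pairing
odd under reversal, and only the `r`-parts survive, which have length at most `R`. -/

section Cochains

variable {α : Type}

theorem d2_d1 (ψ : FreeGroup α → ℝ) (g h i : FreeGroup α) : d2 (d1 ψ) g h i = 0 := by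
  simp only [d2, d1, mul_assoc]
  ring

theorem d3_d2 (η : FreeGroup α → FreeGroup α → ℝ) (g h i j : FreeGroup α) :
    d3 (d2 η) g h i j = 0 := by
  simp only [d3, d2, mul_assoc]
  ring

theorem d3_add (β β' : FreeGroup α → FreeGroup α → FreeGroup α → ℝ) (g h i j : FreeGroup α) :
    d3 (fun x y z => β x y z + β' x y z) g h i j = d3 β g h i j + d3 β' g h i j := by
  simp only [d3]
  ring

theorem d3_cup {φ : FreeGroup α → ℝ} {ω : FreeGroup α → FreeGroup α → ℝ}
    (hω : ∀ g h i, d2 ω g h i = 0) (g h i j : FreeGroup α) :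
    d3 (fun x y z => φ x * ω y z) g h i j = d1 φ g h * ω i j := by
  have := hω h i j
  simp only [d3, d1, d2] at this ⊢
  linear_combination (-φ g) * this

end Cochains

section SeqInv

variable {α : Type}

theorem seqInv_cons (p : FreeGroup α) (l : List (FreeGroup α)) :
    seqInv (p :: l) = seqInv l ++ [p⁻¹] := by
  simp [seqInv]

theorem seqInv_append (l₁ l₂ : List (FreeGroup α)) :
    seqInv (l₁ ++ l₂) = seqInv l₂ ++ seqInv l₁ := by
  simp [seqInv]

theorem seqInv_seqInv (l : List (FreeGroup α)) : seqInv (seqInv l) = l := by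
  simp [seqInv, List.map_reverse]

theorem length_seqInv (l : List (FreeGroup α)) : (seqInv l).length = l.length := by
  simp [seqInv]

end SeqInv

section ZetaL

variable {α : Type} (K : FreeGroup α → FreeGroup α → FreeGroup α → ℝ)

theorem zetaL_append (l₁ l₂ : List (FreeGroup α)) (w v : FreeGroup α) :
    zetaL K (l₁ ++ l₂) w v = zetaL K l₁ (l₂.prod * w) v + zetaL K l₂ w v := by
  induction l₁ with
  | nil => simp [zetaL]
  | cons p t ih =>
    rw [List.cons_append, zetaL, ih, List.prod_append, mul_assoc, zetaL]
    ring

theorem zetaL_seqInv {l : List (FreeGroup α)} {v : FreeGroup α}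
    (hK : ∀ p ∈ l, ∀ u, K p⁻¹ (p * u) v = -K p u v) (w : FreeGroup α) :
    zetaL K (seqInv l) (l.prod * w) v = -zetaL K l w v := by
  induction l generalizing w with
  | nil => simp [seqInv, zetaL]
  | cons q t ih =>
    have hq := hK q List.mem_cons_self (t.prod * w)
    have hprod : [q⁻¹].prod * ((q :: t).prod * w) = t.prod * w := by simp [mul_assoc]
    rw [seqInv_cons, zetaL_append, hprod, ih fun p hp => hK p (List.mem_cons_of_mem q hp)]
    simp only [zetaL, List.prod_nil, List.prod_cons, one_mul, mul_assoc, hq]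
    ring

theorem zetaL_eq_of_mul_right {h i : FreeGroup α} {c : FreeGroup α → ℝ} {x : ℝ}
    (hK : ∀ p u, K p (u * h) i = K p u (h * i) - K p u h + c p * x) (l : List (FreeGroup α)) :
    zetaL K l h i = zetaL K l 1 (h * i) - zetaL K l 1 h + (l.map c).sum * x := by
  induction l with
  | nil => simp [zetaL]
  | cons p t ih =>
    simp only [zetaL, mul_one, List.map_cons, List.sum_cons]
    rw [ih, hK]
    ring

theorem abs_zetaL_le {l : List (FreeGroup α)} {v : FreeGroup α} {C : ℝ}
    (hK : ∀ p ∈ l, ∀ u, |K p u v| ≤ C) (w : FreeGroup α) :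
    |zetaL K l w v| ≤ l.length * C := by
  induction l with
  | nil => simp [zetaL]
  | cons p t ih =>
    calc |zetaL K (p :: t) w v| ≤ |K p (t.prod * w) v| + |zetaL K t w v| := abs_add_le _ _
      _ ≤ C + t.length * C :=
          add_le_add (hK p List.mem_cons_self _) (ih fun q hq => hK q (List.mem_cons_of_mem p hq))
      _ = (p :: t).length * C := by push_cast [List.length_cons]; ring

/-- Along a triangle whose sides are `a·r₁·c₂⁻¹`, `c₂·r₂·c₃⁻¹` and `a·r₃⁻¹·c₃⁻¹`, the
contributions of the legs `a`, `c₂`, `c₃` cancel and only the short middle parts survive. -/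
theorem zetaL_triangle {a r₁ c₂ r₂ c₃ r₃ : List (FreeGroup α)} {g h i : FreeGroup α}
    (hg : (a ++ r₁ ++ seqInv c₂).prod = g) (hh : (c₂ ++ r₂ ++ seqInv c₃).prod = h)
    (hgh : (a ++ seqInv r₃ ++ seqInv c₃).prod = g * h)
    (hK : ∀ p ∈ c₂, ∀ u, K p⁻¹ (p * u) i = -K p u i) :
    zetaL K (a ++ r₁ ++ seqInv c₂) h i + zetaL K (c₂ ++ r₂ ++ seqInv c₃) 1 i
        - zetaL K (a ++ seqInv r₃ ++ seqInv c₃) 1 i =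
      zetaL K r₁ ((seqInv c₂).prod * h) i + zetaL K r₂ (seqInv c₃).prod i
        - zetaL K (seqInv r₃) (seqInv c₃).prod i := by
  have hcancel : (r₁ ++ seqInv c₂).prod * h = (seqInv r₃ ++ seqInv c₃).prod := by
    apply mul_left_cancel (a := a.prod)
    rw [← mul_assoc, ← List.prod_append, ← List.append_assoc, hg, ← List.prod_append,
      ← List.append_assoc, hgh]
  have hc₂ : zetaL K (seqInv c₂) h i = -zetaL K c₂ (r₂ ++ seqInv c₃).prod i := by
    rw [← zetaL_seqInv K hK, ← List.prod_append, ← List.append_assoc, hh]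
  rw [List.append_assoc a, zetaL_append K a, hcancel]
  simp only [zetaL_append, List.prod_append, mul_one, hc₂]
  ring

end ZetaL

section CupPrimitive

variable {α : Type}

/-- The kernel `λ(p)·(ω(u,v) + ω(pu,v))/2`: averaging over both endpoints of the piece `p`
makes it odd under reversing `p`, which is what lets back-and-forth legs cancel. -/
noncomputable def avgKernel (lam : FreeGroup α → ℝ) (ω : FreeGroup α → FreeGroup α → ℝ)
    (p u v : FreeGroup α) : ℝ :=
  lam p * ((ω u v + ω (p * u) v) / 2)

theorem avgKernel_inv {lam : FreeGroup α → ℝ} {p : FreeGroup α} (hp : lam p⁻¹ = -lam p)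
    (ω : FreeGroup α → FreeGroup α → ℝ) (u v : FreeGroup α) :
    avgKernel lam ω p⁻¹ (p * u) v = -avgKernel lam ω p u v := by
  simp only [avgKernel, hp, inv_mul_cancel_left]
  ring

theorem avgKernel_mul_right {ω : FreeGroup α → FreeGroup α → ℝ} (hω : ∀ g h i, d2 ω g h i = 0)
    (lam : FreeGroup α → ℝ) (p u h i : FreeGroup α) :
    avgKernel lam ω p (u * h) i =
      avgKernel lam ω p u (h * i) - avgKernel lam ω p u h + lam p * ω h i := by
  have h₁ := hω u h i
  have h₂ := hω (p * u) h i
  simp only [d2, avgKernel, mul_assoc] at h₁ h₂ ⊢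
  linear_combination (-lam p / 2) * (h₁ + h₂)

theorem abs_avgKernel_le {lam : FreeGroup α → ℝ} {ω : FreeGroup α → FreeGroup α → ℝ}
    {p : FreeGroup α} {B D : ℝ} (hp : |lam p| ≤ B) (hω : ∀ g h, |ω g h| ≤ D) (u v : FreeGroup α) :
    |avgKernel lam ω p u v| ≤ B * D := by
  have hmean : |(ω u v + ω (p * u) v) / 2| ≤ D := by
    rw [abs_div, abs_two, div_le_iff₀ two_pos]
    linarith [abs_add_le (ω u v) (ω (p * u) v), hω u v, hω (p * u) v]
  rw [avgKernel, abs_mul]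
  exact mul_le_mul hp hmean (abs_nonneg _) ((abs_nonneg _).trans hp)

/-- `β = φ ⌣ ω + δ²η` with `η(u,v) = Σ_j λ(u_j)·(ω(u_{j+1}⋯u_k, v) + ω(u_j⋯u_k, v))/2`
for `Δ(u) = (u₁,…,u_k)`. -/
noncomputable def cupPrimitive (D : FreeGroup α → List (FreeGroup α)) (lam : FreeGroup α → ℝ)
    (ω : FreeGroup α → FreeGroup α → ℝ) (g h i : FreeGroup α) : ℝ :=
  decQM D lam g * ω h i + d2 (fun u v => zetaL (avgKernel lam ω) (D u) 1 v) g h i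

theorem d3_cupPrimitive {ω : FreeGroup α → FreeGroup α → ℝ} (hω : ∀ g h i, d2 ω g h i = 0)
    (D : FreeGroup α → List (FreeGroup α)) (lam : FreeGroup α → ℝ) (g₁ g₂ g₃ g₄ : FreeGroup α) :
    d3 (cupPrimitive D lam ω) g₁ g₂ g₃ g₄ = d1 (decQM D lam) g₁ g₂ * ω g₃ g₄ := by
  unfold cupPrimitive
  rw [d3_add, d3_cup hω, d3_d2, add_zero]

theorem cupPrimitive_eq {ω : FreeGroup α → FreeGroup α → ℝ} (hω : ∀ g h i, d2 ω g h i = 0)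
    (D : FreeGroup α → List (FreeGroup α)) (lam : FreeGroup α → ℝ) (g h i : FreeGroup α) :
    cupPrimitive D lam ω g h i =
      zetaL (avgKernel lam ω) (D g) h i + zetaL (avgKernel lam ω) (D h) 1 i
        - zetaL (avgKernel lam ω) (D (g * h)) 1 i := by
  rw [zetaL_eq_of_mul_right _ (fun p u => avgKernel_mul_right hω lam p u h i) (D g)]
  simp only [cupPrimitive, d2, decQM]
  ring

end CupPrimitive

namespace Decomp

variable {α : Type} [DecidableEq α]

theorem D_mul (dec : Decomp α) (g h : FreeGroup α) :
    dec.D (g * h) =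
      cSeq1 dec.D g h ++ seqInv (rSeq3 dec.D g h) ++ seqInv (cSeq3 dec.D g h) := by
  have h₁ := dec.inv_eq (h⁻¹ * g⁻¹)
  rw [mul_inv_rev, inv_inv, inv_inv] at h₁
  rw [h₁, dec.triangle₃, seqInv_append, seqInv_append, seqInv_seqInv, List.append_assoc]

theorem exists_triangle (dec : Decomp α) (g h : FreeGroup α) :
    ∃ a r₁ c₂ r₂ c₃ r₃ : List (FreeGroup α),
      dec.D g = a ++ r₁ ++ seqInv c₂ ∧ dec.D h = c₂ ++ r₂ ++ seqInv c₃ ∧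
      dec.D (g * h) = a ++ seqInv r₃ ++ seqInv c₃ ∧
      r₁.length ≤ dec.R ∧ r₂.length ≤ dec.R ∧ r₃.length ≤ dec.R :=
  ⟨_, _, _, _, _, _, dec.triangle₁ g h, dec.triangle₂ g h, dec.D_mul g h,
    dec.rBound₁ g h, dec.rBound₂ g h, dec.rBound₃ g h⟩

theorem abs_cupPrimitive_le (dec : Decomp α) {lam : FreeGroup α → ℝ}
    {ω : FreeGroup α → FreeGroup α → ℝ} {B D : ℝ}
    (hlam : ∀ p ∈ dec.pieces, lam p⁻¹ = -lam p) (hB : ∀ p ∈ dec.pieces, |lam p| ≤ B)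
    (hB₀ : 0 ≤ B) (hω : ∀ g h i, d2 ω g h i = 0) (hωD : ∀ g h, |ω g h| ≤ D)
    (g h i : FreeGroup α) :
    |cupPrimitive dec.D lam ω g h i| ≤ 3 * (dec.R * (B * D)) := by
  set K := avgKernel lam ω
  have hBD : 0 ≤ B * D := mul_nonneg hB₀ ((abs_nonneg _).trans (hωD 1 1))
  have hshort : ∀ (l : List (FreeGroup α)) (w : FreeGroup α), (∀ p ∈ l, p ∈ dec.pieces) →
      l.length ≤ dec.R → |zetaL K l w i| ≤ dec.R * (B * D) := fun l w hl hR =>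
    (abs_zetaL_le K (fun p hp u => abs_avgKernel_le (hB p (hl p hp)) hωD u i) w).trans
      (mul_le_mul_of_nonneg_right (by exact_mod_cast hR) hBD)
  obtain ⟨a, r₁, c₂, r₂, c₃, r₃, hDg, hDh, hDgh, hr₁, hr₂, hr₃⟩ := dec.exists_triangle g h
  have hmem : ∀ {x : FreeGroup α} {l l₁ l₂ : List (FreeGroup α)}, dec.D x = l₁ ++ l ++ l₂ →
      ∀ p ∈ l, p ∈ dec.pieces := fun hx p hp =>
    dec.mem_pieces _ p (by rw [hx]; exact List.mem_append_left _ (List.mem_append_right _ hp))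
  have hK : ∀ p ∈ c₂, ∀ u, K p⁻¹ (p * u) i = -K p u i := fun p hp u =>
    avgKernel_inv (hlam p (dec.mem_pieces h p (by simp [hDh, hp]))) ω u i
  rw [cupPrimitive_eq hω, hDg, hDh, hDgh,
    zetaL_triangle K (hDg ▸ dec.prod_eq g) (hDh ▸ dec.prod_eq h) (hDgh ▸ dec.prod_eq _) hK]
  have e₁ := hshort r₁ ((seqInv c₂).prod * h) (hmem hDg) hr₁
  have e₂ := hshort r₂ (seqInv c₃).prod (hmem hDh) hr₂
  have e₃ := hshort (seqInv r₃) (seqInv c₃).prod (hmem hDgh) (by rwa [length_seqInv])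
  calc _ ≤ |zetaL K r₁ ((seqInv c₂).prod * h) i + zetaL K r₂ (seqInv c₃).prod i|
        + |zetaL K (seqInv r₃) (seqInv c₃).prod i| := abs_sub _ _
    _ ≤ dec.R * (B * D) + dec.R * (B * D) + dec.R * (B * D) :=
        add_le_add ((abs_add_le _ _).trans (add_le_add e₁ e₂)) e₃
    _ = 3 * (dec.R * (B * D)) := by ring

end Decomp

theorem cup_product_decomposable_continuous_trivial_general {α : Type} [DecidableEq α]
    (dec : Decomp α) (φ ψ : FreeGroup α → ℝ)
    (hφ : IsDecomposable dec φ)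
    (hψ : DeltaContinuousQM dec.D ψ) :
    ∃ β : FreeGroup α → FreeGroup α → FreeGroup α → ℝ,
      (∃ C : ℝ, ∀ g h i, |β g h i| ≤ C) ∧
      ∀ g₁ g₂ g₃ g₄ : FreeGroup α,
        d3 β g₁ g₂ g₃ g₄ = d1 φ g₁ g₂ * d1 ψ g₃ g₄ := by
  obtain ⟨lam, ⟨B, hB⟩, hlam, rfl⟩ := hφ
  obtain ⟨-, ⟨D, -, hD⟩, -⟩ := hψ
  have hB' : ∀ p ∈ dec.pieces, |lam p| ≤ max B 0 := fun p hp => (hB p hp).trans (le_max_left _ _)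
  exact ⟨cupPrimitive dec.D lam (d1 ψ),
    ⟨_, dec.abs_cupPrimitive_le hlam hB' (le_max_right _ _) (d2_d1 ψ) fun g h => (hD g h).le⟩,
    d3_cupPrimitive (d2_d1 ψ) dec.D lam⟩

/-- Theorem B: if `φ` is `Δ`-decomposable and `ψ` is a `Δ`-continuous
symmetric quasimorphism, then the cup product `[δ¹φ] ⌣ [δ¹ψ] ∈ H⁴_b(F,ℝ)` is trivial:
there is a bounded `β` with `δ³β = δ¹φ ⌣ δ¹ψ`. -/
theorem cup_product_decomposable_continuous_trivial {α : Type} [Fintype α] [DecidableEq α]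
    (hab : ∃ a b : α, a ≠ b) (dec : Decomp α) (φ ψ : FreeGroup α → ℝ)
    (hφ : IsDecomposable dec φ)
    (hψ : DeltaContinuousQM dec.D ψ) :
    ∃ β : FreeGroup α → FreeGroup α → FreeGroup α → ℝ,
      (∃ C : ℝ, ∀ g h i, |β g h i| ≤ C) ∧
      ∀ g₁ g₂ g₃ g₄ : FreeGroup α,
        d3 β g₁ g₂ g₃ g₄ = d1 φ g₁ g₂ * d1 ψ g₃ g₄ :=
  cup_product_decomposable_continuous_trivial_general dec φ ψ hφ hψ
end

section
/- Let F be a non-abelian free group, Δ a decomposition of F into pieces P with constant R, and λ : P → ℝ a bounded map with λ(p⁻¹) = −λ(p) for all p ∈ P. Then the Δ-decomposable map φ_{λ,Δ} is a symmetric quasimorphism; in fact φ_{λ,Δ}(g⁻¹) = −φ_{λ,Δ}(g) for all g ∈ F, and |δ¹φ_{λ,Δ}(g,h)| ≤ 3R·‖λ‖_∞ for all g, h ∈ F. Moreover δ¹φ_{λ,Δ}(g,h) depends only on the r-part of the Δ-triangle of (g,h). -/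
/-! Since `λ` is odd and `Δ(g⁻¹)` is `Δ(g)` reversed and inverted, `φ = φ_{λ,Δ}` is symmetric,
so `δ¹φ(g,h) = φ(g) + φ(h) + φ(h⁻¹g⁻¹)`. In the `Δ`-triangle each c-part occurs once as `c̲ⱼ⁻¹`
and once as `c̲ⱼ`, so its contributions cancel, leaving the sum of `λ` over the three r-parts,
which has at most `3R` terms. -/

section Sums

variable {α : Type}

theorem sum_map_seqInv {lam : FreeGroup α → ℝ} {l : List (FreeGroup α)}
    (hodd : ∀ p ∈ l, lam p⁻¹ = -lam p) : ((seqInv l).map lam).sum = -(l.map lam).sum := by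
  rw [seqInv, List.map_reverse, List.sum_reverse, List.map_map, Function.comp_def,
    List.map_congr_left hodd, List.sum_neg, List.map_map]
  rfl

theorem abs_sum_map_le_length_mul {β : Type} {f : β → ℝ} {B : ℝ} :
    ∀ {l : List β}, (∀ p ∈ l, |f p| ≤ B) → |(l.map f).sum| ≤ l.length * B
  | [], _ => by simp
  | a :: l, hB => by
    rw [List.map_cons, List.sum_cons, List.length_cons, Nat.cast_succ, add_mul, one_mul,
      add_comm _ B]
    exact (abs_add_le _ _).trans <| add_le_add (hB a List.mem_cons_self)
      (abs_sum_map_le_length_mul fun p hp => hB p (List.mem_cons_of_mem a hp))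

end Sums

namespace Decomp

variable {α : Type} [DecidableEq α] (dec : Decomp α) {lam : FreeGroup α → ℝ}

theorem nonneg_of_abs_le [Nonempty α] {B : ℝ} (hB : ∀ p ∈ dec.pieces, |lam p| ≤ B) :
    0 ≤ B := by
  obtain ⟨a⟩ := ‹Nonempty α›
  have hD : dec.D (FreeGroup.of a) ≠ [] := fun h => by
    simpa [h] using dec.prod_eq (FreeGroup.of a)
  obtain ⟨p, hp⟩ := List.exists_mem_of_ne_nil _ hD
  exact (abs_nonneg _).trans (hB p (dec.mem_pieces _ p hp))

theorem abs_sum_map_le_R_mul {B : ℝ} (hB : ∀ p ∈ dec.pieces, |lam p| ≤ B) (hB₀ : 0 ≤ B)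
    {x : FreeGroup α} {c r c' : List (FreeGroup α)} (hx : dec.D x = c ++ r ++ c')
    (hr : r.length ≤ dec.R) : |(r.map lam).sum| ≤ dec.R * B :=
  (abs_sum_map_le_length_mul fun p hp => hB p (dec.mem_pieces x p (by simp [hx, hp]))).trans
    (mul_le_mul_of_nonneg_right (by exact_mod_cast hr) hB₀)

variable (hodd : ∀ p ∈ dec.pieces, lam p⁻¹ = -lam p)
include hodd

theorem decQM_inv (g : FreeGroup α) : decQM dec.D lam g⁻¹ = -decQM dec.D lam g := by
  rw [decQM, dec.inv_eq]
  exact sum_map_seqInv fun p hp => hodd p (dec.mem_pieces g p hp)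

theorem decQM_of_D_eq {x : FreeGroup α} {c r c' : List (FreeGroup α)}
    (hx : dec.D x = c ++ r ++ seqInv c') :
    decQM dec.D lam x = (c.map lam).sum + (r.map lam).sum - (c'.map lam).sum := by
  have hc' : ((seqInv c').map lam).sum = -(c'.map lam).sum := by
    rw [← neg_neg ((seqInv c').map lam).sum, ← sum_map_seqInv, seqInv_seqInv]
    exact fun p hp => hodd p (dec.mem_pieces x p (by simp [hx, hp]))
  rw [decQM, hx, List.map_append, List.map_append, List.sum_append, List.sum_append, hc',
    sub_eq_add_neg]

theorem d1_decQM (g h : FreeGroup α) :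
    d1 (decQM dec.D lam) g h = ((rSeq1 dec.D g h).map lam).sum +
      ((rSeq2 dec.D g h).map lam).sum + ((rSeq3 dec.D g h).map lam).sum := by
  have hgh : decQM dec.D lam (g * h) = -decQM dec.D lam (h⁻¹ * g⁻¹) := by
    rw [← dec.decQM_inv hodd, mul_inv_rev, inv_inv, inv_inv]
  rw [d1, hgh, dec.decQM_of_D_eq hodd (dec.triangle₁ g h),
    dec.decQM_of_D_eq hodd (dec.triangle₂ g h), dec.decQM_of_D_eq hodd (dec.triangle₃ g h)]
  ring

theorem abs_d1_decQM_le {B : ℝ} (hB : ∀ p ∈ dec.pieces, |lam p| ≤ B) (hB₀ : 0 ≤ B)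
    (g h : FreeGroup α) : |d1 (decQM dec.D lam) g h| ≤ 3 * dec.R * B := by
  have h₁ := dec.abs_sum_map_le_R_mul hB hB₀ (dec.triangle₁ g h) (dec.rBound₁ g h)
  have h₂ := dec.abs_sum_map_le_R_mul hB hB₀ (dec.triangle₂ g h) (dec.rBound₂ g h)
  have h₃ := dec.abs_sum_map_le_R_mul hB hB₀ (dec.triangle₃ g h) (dec.rBound₃ g h)
  rw [dec.d1_decQM hodd]
  linarith [abs_add_three ((rSeq1 dec.D g h).map lam).sum ((rSeq2 dec.D g h).map lam).sum
    ((rSeq3 dec.D g h).map lam).sum]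

end Decomp

theorem decomposable_is_symmetric_qm_general {α : Type} [DecidableEq α]
    (hab : ∃ a b : α, a ≠ b) (dec : Decomp α)
    (lam : FreeGroup α → ℝ) (B : ℝ)
    (hB : ∀ p ∈ dec.pieces, |lam p| ≤ B)
    (hodd : ∀ p ∈ dec.pieces, lam p⁻¹ = -lam p) :
    IsQuasimorphism (decQM dec.D lam) ∧
    IsSymmetricMap (decQM dec.D lam) ∧
    (∀ g h : FreeGroup α, |d1 (decQM dec.D lam) g h| ≤ 3 * (dec.R : ℝ) * B) ∧
    (∀ g h g' h' : FreeGroup α,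
      rSeq1 dec.D g h = rSeq1 dec.D g' h' →
      rSeq2 dec.D g h = rSeq2 dec.D g' h' →
      rSeq3 dec.D g h = rSeq3 dec.D g' h' →
      d1 (decQM dec.D lam) g h = d1 (decQM dec.D lam) g' h') := by
  obtain ⟨a, -, -⟩ := hab
  have : Nonempty α := ⟨a⟩
  have hB₀ := dec.nonneg_of_abs_le hB
  have bound := dec.abs_d1_decQM_le hodd hB hB₀
  refine ⟨⟨3 * dec.R * B + 1, by positivity, fun g h => (bound g h).trans_lt (lt_add_one _)⟩,
    dec.decQM_inv hodd, bound, ?_⟩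
  intro g h g' h' h₁ h₂ h₃
  rw [dec.d1_decQM hodd, dec.d1_decQM hodd, h₁, h₂, h₃]

/-- Proposition 3.9: `φ_{λ,Δ}` is a symmetric quasimorphism with
`|δ¹φ_{λ,Δ}(g,h)| ≤ 3R‖λ‖_∞`, and `δ¹φ_{λ,Δ}(g,h)` depends only on the r-part of the
`Δ`-triangle of `(g,h)`. -/
theorem decomposable_is_symmetric_qm {α : Type} [Fintype α] [DecidableEq α]
    (hab : ∃ a b : α, a ≠ b) (dec : Decomp α)
    (lam : FreeGroup α → ℝ) (B : ℝ)
    (hB : ∀ p ∈ dec.pieces, |lam p| ≤ B)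
    (hodd : ∀ p ∈ dec.pieces, lam p⁻¹ = -lam p) :
    IsQuasimorphism (decQM dec.D lam) ∧
    IsSymmetricMap (decQM dec.D lam) ∧
    (∀ g h : FreeGroup α, |d1 (decQM dec.D lam) g h| ≤ 3 * (dec.R : ℝ) * B) ∧
    (∀ g h g' h' : FreeGroup α,
      rSeq1 dec.D g h = rSeq1 dec.D g' h' →
      rSeq2 dec.D g h = rSeq2 dec.D g' h' →
      rSeq3 dec.D g h = rSeq3 dec.D g' h' →
      d1 (decQM dec.D lam) g h = d1 (decQM dec.D lam) g' h') :=
  decomposable_is_symmetric_qm_general hab dec lam B hB hodd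
end

section
/- Let F be a non-abelian free group and w ∈ F a non self-overlapping reduced word. Then every g ∈ F can be written uniquely in the form g = u₁ w^{ε₁} u₂ ⋯ u_{k−1} w^{ε_{k−1}} u_k as a reduced product, where the u_j ∈ F may be trivial, ε_j ∈ {−1, +1}, and no u_j contains w or w⁻¹ as a subword. -/
/-! Two occurrences of `w^{±1}` in a word cannot overlap. An overlap of `w` with itself (or of
`w⁻¹` with itself) is a border of `w`, and a shortest border `T` is at most half as long as `w`,
so it exhibits `w` as `T M T`. An overlap of `w` with `w⁻¹` is a nonempty reduced word equal to
its own formal inverse, i.e. an element of order two in the torsion-free group `F`. Hence in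
every factorization of `g` the first factor `w^{ε₁}` sits at the first occurrence of `w^{±1}` in
the reduced word of `g`, and factorizations are built and compared by peeling off this first
occurrence. -/

open FreeGroup

theorem List.exists_eq_append_append_of_border {β : Type*} {W A S B : List β}
    (hAS : W = A ++ S) (hSB : W = S ++ B) (hA : A ≠ []) (hS : S ≠ []) :
    ∃ T M, T ≠ [] ∧ W = T ++ M ++ T := by
  induction h : S.length using Nat.strong_induction_on generalizing A S B with
  | _ n ih =>
  rcases List.append_eq_append_iff.mp (hSB.symm.trans hAS) with ⟨M, rfl, -⟩ | ⟨C, hAC, hCB⟩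
  · exact ⟨S, M, hS, hAS⟩
  · -- `C` is a shorter border: `W = (A ++ A) ++ C = C ++ (B ++ B)`
    by_cases hC : C = []
    · subst hC
      exact ⟨S, [], hS, by simp_all⟩
    · refine ih C.length (by simp [← h, hAC, List.length_pos_iff.mpr hA]) (A := A ++ A)
        (B := B ++ B) ?_ ?_ (by simp [hA]) hC rfl
      · rw [hAS, hAC, List.append_assoc]
      · rw [hSB, hCB, List.append_assoc]

theorem List.exists_split_at_first_infix {β : Type*} {s : Set (List β)} (hs : [] ∉ s) :
    ∀ {L : List β}, (∃ X ∈ s, X <:+: L) →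
      ∃ U, ∃ X ∈ s, ∃ R, L = U ++ X ++ R ∧ ∀ Y ∈ s, ¬Y <:+: U
  | [], ⟨X, hX, hXL⟩ => absurd (List.eq_nil_of_infix_nil hXL ▸ hX) hs
  | a :: L, ⟨X, hX, hXL⟩ => by
    by_cases hpre : ∃ X ∈ s, X <+: a :: L
    · obtain ⟨X, hX, R, hR⟩ := hpre
      refine ⟨[], X, hX, R, by simp [hR], fun Y hY hYU => ?_⟩
      exact hs (List.eq_nil_of_infix_nil hYU ▸ hY)
    · have hXL' : X <:+: L :=
        (List.infix_cons_iff.mp hXL).resolve_left fun h => hpre ⟨X, hX, h⟩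
      obtain ⟨U, X', hX', R, rfl, hU⟩ := exists_split_at_first_infix hs ⟨X, hX, hXL'⟩
      refine ⟨a :: U, X', hX', R, rfl, fun Y hY hYU => ?_⟩
      rcases List.infix_cons_iff.mp hYU with hpref | hinf
      · exact hpre ⟨Y, hY, hpref.trans ⟨X' ++ R, by simp⟩⟩
      · exact hU Y hY hinf

def signedPow {G : Type*} [Group G] (g : G) (e : Bool) : G := if e then g else g⁻¹

theorem signedPow_injective {G : Type*} [Group G] [IsMulTorsionFree G] {g : G} (hg : g ≠ 1) :
    Function.Injective (signedPow g) := by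
  have : g ≠ g⁻¹ := self_ne_inv.mpr hg
  intro e e' h
  cases e <;> cases e' <;> simp_all [signedPow, eq_comm]

section Factorization

variable {α : Type} [DecidableEq α] {w : FreeGroup α}

theorem FreeGroup.IsReduced.toWord_mk {L : List (α × Bool)} (h : IsReduced L) :
    (mk L).toWord = L :=
  FreeGroup.toWord_mk.trans h.reduce_eq

theorem FreeGroup.IsReduced.invRev_ne_self {S : List (α × Bool)} (hS : IsReduced S)
    (hne : S ≠ []) : invRev S ≠ S := by
  intro h
  have : (mk S)⁻¹ = mk S := toWord_injective (by rw [toWord_inv, hS.toWord_mk, h])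
  exact hne (by rw [← hS.toWord_mk, inv_eq_self.mp this, toWord_one])

theorem FreeGroup.prod_eq_mk_flatten (l : List (FreeGroup α)) :
    l.prod = mk (l.map toWord).flatten := by
  induction l with
  | nil => rfl
  | cons x l ih => rw [List.prod_cons, ih, List.map_cons, List.flatten_cons, ← mul_mk, mk_toWord]

theorem reducedProd_and_eq_prod_iff {l : List (FreeGroup α)} {g : FreeGroup α} :
    ReducedProd l ∧ g = l.prod ↔ (l.map toWord).flatten = g.toWord := by
  have hsum : (l.map wlen).sum = (l.map toWord).flatten.length := by
    rw [List.length_flatten, List.map_map]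
    rfl
  rw [ReducedProd, wlen, hsum, prod_eq_mk_flatten, toWord_mk]
  constructor
  · rintro ⟨hlen, rfl⟩
    exact (reduce.red.sublist.eq_of_length hlen).symm
  · intro h
    rw [h, reduce_toWord, mk_toWord]
    exact ⟨rfl, rfl⟩

theorem length_toWord_signedPow (e : Bool) :
    (signedPow w e).toWord.length = w.toWord.length := by
  cases e <;> simp [signedPow, toWord_inv, invRev_length]

theorem toWord_signedPow_ne_nil (hw1 : w ≠ 1) (e : Bool) : (signedPow w e).toWord ≠ [] := by
  rw [ne_eq, toWord_eq_nil_iff]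
  cases e <;> simpa [signedPow] using hw1

theorem not_subword_and_not_subword_inv_iff {u : FreeGroup α} :
    ¬Subword w u ∧ ¬Subword w⁻¹ u ↔ ∀ e, ¬(signedPow w e).toWord <:+: u.toWord := by
  rw [Bool.forall_bool, and_comm]
  rfl

def IsWFactorization (w : FreeGroup α) (L : List (α × Bool))
    (f : List (FreeGroup α) × List Bool) : Prop :=
  f.1.length = f.2.length + 1 ∧ (∀ u ∈ f.1, ¬Subword w u ∧ ¬Subword w⁻¹ u) ∧
    ((wfacList w f.1 f.2).map toWord).flatten = L

theorem isWFactorization_nil_iff {L : List (α × Bool)} {us : List (FreeGroup α)} :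
    IsWFactorization w L (us, []) ↔
      ∃ u, us = [u] ∧ (¬Subword w u ∧ ¬Subword w⁻¹ u) ∧ L = u.toWord := by
  constructor
  · rintro ⟨hlen, hus, rfl⟩
    obtain ⟨u, rfl⟩ := List.length_eq_one_iff.mp hlen
    exact ⟨u, rfl, hus u (by simp), by simp [wfacList]⟩
  · rintro ⟨u, rfl, hu, rfl⟩
    exact ⟨rfl, by simpa using hu, by simp [wfacList]⟩

theorem isWFactorization_cons_iff {L : List (α × Bool)} {u : FreeGroup α}
    {us : List (FreeGroup α)} {e : Bool} {eps : List Bool} :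
    IsWFactorization w L (u :: us, e :: eps) ↔ (¬Subword w u ∧ ¬Subword w⁻¹ u) ∧
      ∃ R, IsWFactorization w R (us, eps) ∧ L = u.toWord ++ ((signedPow w e).toWord ++ R) := by
  constructor
  · rintro ⟨hlen, hus, rfl⟩
    obtain ⟨u₂, us, rfl⟩ := List.exists_cons_of_length_eq_add_one (by simpa using hlen)
    refine ⟨hus u (by simp), _,
      ⟨by simpa using hlen, fun v hv => hus v (by simp [hv]), rfl⟩, ?_⟩
    simp [wfacList, signedPow]
  · rintro ⟨hu, R, ⟨hlen, hus, rfl⟩, rfl⟩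
    obtain ⟨u₂, us, rfl⟩ := List.exists_cons_of_length_eq_add_one hlen
    refine ⟨by simpa using hlen, by simpa [hu] using hus, ?_⟩
    simp [wfacList, signedPow]

theorem not_isWFactorization_nil_of_cons {L : List (α × Bool)} {us us' : List (FreeGroup α)}
    {e' : Bool} {eps' : List Bool} (hf : IsWFactorization w L (us, []))
    (hf' : IsWFactorization w L (us', e' :: eps')) : False := by
  obtain ⟨u, -, hu, rfl⟩ := isWFactorization_nil_iff.mp hf
  obtain ⟨u', us', rfl⟩ := List.exists_cons_of_length_eq_add_one hf'.1
  obtain ⟨-, R', -, hL⟩ := isWFactorization_cons_iff.mp hf'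
  exact not_subword_and_not_subword_inv_iff.mp hu e' ⟨u'.toWord, R', by simp [hL]⟩

theorem exists_isWFactorization (hw1 : w ≠ 1) {L : List (α × Bool)} (hL : IsReduced L) :
    ∃ f, IsWFactorization w L f := by
  induction h : L.length using Nat.strong_induction_on generalizing L with
  | _ n ih =>
  have hs : [] ∉ Set.range fun e => (signedPow w e).toWord := by
    rintro ⟨e, he⟩
    exact toWord_signedPow_ne_nil hw1 e he
  by_cases hocc : ∃ X ∈ Set.range fun e => (signedPow w e).toWord, X <:+: L
  · obtain ⟨U, _, ⟨e, rfl⟩, R, rfl, hU⟩ := List.exists_split_at_first_infix hs hocc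
    have hUred : IsReduced U := hL.infix ⟨[], (signedPow w e).toWord ++ R, by simp⟩
    have hX := List.length_pos_iff.mpr (toWord_signedPow_ne_nil hw1 e)
    obtain ⟨⟨us, eps⟩, hR⟩ := ih R.length (by simp only [← h, List.length_append]; omega)
      (hL.infix ⟨U ++ (signedPow w e).toWord, [], by simp⟩) rfl
    refine ⟨(mk U :: us, e :: eps), isWFactorization_cons_iff.mpr ⟨?_, R, hR, ?_⟩⟩
    · rw [not_subword_and_not_subword_inv_iff, hUred.toWord_mk]
      exact fun e' hX' => hU _ ⟨e', rfl⟩ hX'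
    · rw [hUred.toWord_mk, List.append_assoc]
  · refine ⟨([mk L], []), isWFactorization_nil_iff.mpr ⟨mk L, rfl, ?_, hL.toWord_mk.symm⟩⟩
    rw [not_subword_and_not_subword_inv_iff, hL.toWord_mk]
    exact fun e hX => hocc ⟨_, ⟨e, rfl⟩, hX⟩

namespace NonSelfOverlapping

theorem toWord_ne_append_append (hw : NonSelfOverlapping w) {T M : List (α × Bool)}
    (hT : T ≠ []) : w.toWord ≠ T ++ M ++ T := by
  intro h
  have hred : IsReduced (T ++ M ++ T) := h ▸ isReduced_toWord
  have hT' : (mk T).toWord = T := (hred.infix ⟨[], M ++ T, by simp⟩).toWord_mk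
  have hM' : (mk M).toWord = M := (hred.infix ⟨T, T, rfl⟩).toWord_mk
  obtain ⟨hprod, hxyx⟩ := (reducedProd_and_eq_prod_iff (l := [mk T, mk M, mk T]) (g := w)).mpr
    (by simp [hT', hM', h])
  refine hw ⟨mk T, mk M, fun h1 => hT ?_, by simpa [mul_assoc] using hxyx, hprod⟩
  rw [← hT', h1, toWord_one]

theorem not_overlap (hw : NonSelfOverlapping w) {e e' : Bool} {A S B : List (α × Bool)}
    (hX : (signedPow w e).toWord = A ++ S) (hY : (signedPow w e').toWord = S ++ B)
    (hA : A ≠ []) (hS : S ≠ []) : False := by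
  have hred : IsReduced w.toWord := isReduced_toWord
  cases e <;> cases e' <;> simp only [signedPow, Bool.false_eq_true, if_false, if_true,
    toWord_inv] at hX hY
  · obtain ⟨T, M, hT, h⟩ := List.exists_eq_append_append_of_border hX hY hA hS
    refine hw.toWord_ne_append_append (T := invRev T) (M := invRev M)
      (by simpa [invRev] using hT) ?_
    rw [← invRev_invRev (L₁ := w.toWord), h]
    simp [invRev_append]
  · -- `S` and `invRev S` are both prefixes of `w.toWord`
    have hw' : w.toWord = invRev S ++ invRev A := by
      rw [← invRev_invRev (L₁ := w.toWord), hX, invRev_append]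
    have := (List.append_inj (hY.symm.trans hw') (by simp [invRev_length])).1
    exact (hred.infix ⟨[], B, hY.symm⟩).invRev_ne_self hS this.symm
  · -- `S` and `invRev S` are both suffixes of `w.toWord`
    have hw' : w.toWord = invRev B ++ invRev S := by
      rw [← invRev_invRev (L₁ := w.toWord), hY, invRev_append]
    have := (List.append_inj' (hX.symm.trans hw') (by simp [invRev_length])).2
    exact (hred.infix ⟨A, [], by simp [hX]⟩).invRev_ne_self hS this.symm
  · obtain ⟨T, M, hT, h⟩ := List.exists_eq_append_append_of_border hX hY hA hS
    exact hw.toWord_ne_append_append hT h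

theorem length_toWord_le_of_append_eq (hw : NonSelfOverlapping w) {U R R' : List (α × Bool)}
    {u' : FreeGroup α} {e e' : Bool} (hu' : ¬Subword w u' ∧ ¬Subword w⁻¹ u')
    (h : U ++ ((signedPow w e).toWord ++ R) = u'.toWord ++ ((signedPow w e').toWord ++ R')) :
    u'.toWord.length ≤ U.length := by
  by_contra! hlt
  have hu'X := not_subword_and_not_subword_inv_iff.mp hu'
  rcases List.append_eq_append_iff.mp h with ⟨a, hu'a, ha⟩ | ⟨c, hU, -⟩
  swap
  · simp [hU] at hlt
  have ha₀ : a ≠ [] := by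
    rintro rfl
    simp [hu'a] at hlt
  rcases List.append_eq_append_iff.mp ha with ⟨t, hat, -⟩ | ⟨S, hXS, hS⟩
  · exact hu'X e ⟨U, t, by rw [hu'a, hat, List.append_assoc]⟩
  by_cases hS₀ : S = []
  · subst hS₀
    exact hu'X e ⟨U, [], by simp [hu'a, hXS]⟩
  rcases List.append_eq_append_iff.mp hS with ⟨B, hSB, -⟩ | ⟨B, hX'S, -⟩
  · have := congrArg List.length hXS
    simp only [hSB, List.length_append, length_toWord_signedPow] at this
    exact ha₀ (List.eq_nil_of_length_eq_zero (by omega))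
  · exact hw.not_overlap hXS hX'S ha₀ hS₀

theorem eq_of_append_eq (hw : NonSelfOverlapping w) (hw1 : w ≠ 1)
    {u u' : FreeGroup α} {e e' : Bool} {R R' : List (α × Bool)}
    (hu : ¬Subword w u ∧ ¬Subword w⁻¹ u) (hu' : ¬Subword w u' ∧ ¬Subword w⁻¹ u')
    (h : u.toWord ++ ((signedPow w e).toWord ++ R) = u'.toWord ++ ((signedPow w e').toWord ++ R')) :
    u = u' ∧ e = e' ∧ R = R' := by
  have hlen := le_antisymm (hw.length_toWord_le_of_append_eq hu h.symm)
    (hw.length_toWord_le_of_append_eq hu' h)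
  obtain ⟨hu, hXR⟩ := List.append_inj h hlen
  obtain ⟨hX, hR⟩ := List.append_inj hXR (by simp [length_toWord_signedPow])
  exact ⟨toWord_injective hu, signedPow_injective hw1 (toWord_injective hX), hR⟩

theorem isWFactorization_unique (hw : NonSelfOverlapping w) (hw1 : w ≠ 1) {eps : List Bool} :
    ∀ {L : List (α × Bool)} {us us' : List (FreeGroup α)} {eps' : List Bool},
      IsWFactorization w L (us, eps) → IsWFactorization w L (us', eps') →
        (us, eps) = (us', eps') := by
  induction eps with
  | nil =>
    rintro L us us' (_ | ⟨e', eps'⟩) hf hf'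
    · obtain ⟨u, rfl, -, hL⟩ := isWFactorization_nil_iff.mp hf
      obtain ⟨u', rfl, -, hL'⟩ := isWFactorization_nil_iff.mp hf'
      rw [toWord_injective (hL.symm.trans hL')]
    · exact (not_isWFactorization_nil_of_cons hf hf').elim
  | cons e eps ih =>
    rintro L us us' (_ | ⟨e', eps'⟩) hf hf'
    · exact (not_isWFactorization_nil_of_cons hf' hf).elim
    obtain ⟨u, us, rfl⟩ := List.exists_cons_of_length_eq_add_one hf.1
    obtain ⟨u', us', rfl⟩ := List.exists_cons_of_length_eq_add_one hf'.1
    obtain ⟨hu, R, hR, rfl⟩ := isWFactorization_cons_iff.mp hf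
    obtain ⟨hu', R', hR', hL⟩ := isWFactorization_cons_iff.mp hf'
    obtain ⟨rfl, rfl, rfl⟩ := hw.eq_of_append_eq hw1 hu hu' hL
    obtain ⟨rfl, rfl⟩ := Prod.mk.inj (ih hR hR')
    rfl

end NonSelfOverlapping

end Factorization

theorem brooks_factorization_unique_general {α : Type} [DecidableEq α]
    (w : FreeGroup α)
    (hw : NonSelfOverlapping w) (hw1 : w ≠ 1) (g : FreeGroup α) :
    ∃! f : List (FreeGroup α) × List Bool,
      f.1.length = f.2.length + 1 ∧
      (∀ u ∈ f.1, ¬Subword w u ∧ ¬Subword w⁻¹ u) ∧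
      ReducedProd (wfacList w f.1 f.2) ∧
      g = (wfacList w f.1 f.2).prod := by
  simp only [reducedProd_and_eq_prod_iff]
  obtain ⟨f, hf⟩ := exists_isWFactorization hw1 (isReduced_toWord (x := g))
  exact ⟨f, hf, fun f' hf' => hw.isWFactorization_unique hw1 hf' hf⟩

/-- Example 3.5: for a nontrivial non self-overlapping word `w`, every
`g ∈ F` can be uniquely written as a reduced product `g = u₁ w^{ε₁} u₂ ⋯ u_{k−1}
w^{ε_{k−1}} u_k` where no `u_j` contains `w` or `w⁻¹` as a subword. -/
theorem brooks_factorization_unique {α : Type} [Fintype α] [DecidableEq α]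
    (hab : ∃ a b : α, a ≠ b) (w : FreeGroup α)
    (hw : NonSelfOverlapping w) (hw1 : w ≠ 1) (g : FreeGroup α) :
    ∃! f : List (FreeGroup α) × List Bool,
      f.1.length = f.2.length + 1 ∧
      (∀ u ∈ f.1, ¬Subword w u ∧ ¬Subword w⁻¹ u) ∧
      ReducedProd (wfacList w f.1 f.2) ∧
      g = (wfacList w f.1 f.2).prod :=
  brooks_factorization_unique_general w hw hw1 g
end

section
/- Let F be the free group on x₁,…,x_n and let λ₁,…,λ_n : ℤ → ℝ be bounded functions with λ_j(−m) = −λ_j(m) for all m. Define φ : F → ℝ by φ(1) = 0 and φ(g) = Σ_{j=1}^k λ_{n_j}(m_j), where g = x_{n₁}^{m₁}⋯x_{n_k}^{m_k} is the unique expression with all m_j ≠ 0 and no consecutive n_j equal. Then φ is a symmetric quasimorphism: φ(g⁻¹) = −φ(g) for all g, and there exists D > 0 with |φ(g) + φ(h) − φ(gh)| < D for all g, h ∈ F. -/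
/-! Every element is `rolliProd` of some normal form, and `φ` is the `λ`-sum of any normal
form, so it suffices to compare normal forms. Inverting reverses the syllables and negates the
exponents, so oddness of `λ` gives symmetry. Multiplying two normal forms cancels a block of
syllable pairs `x_j^m, x_j^{-m}` at the junction, whose `λ`-values cancel by oddness, and then
merges at most one pair of syllables `x_j^a x_j^b` into `x_j^{a+b}`; this changes the `λ`-sum by
at most three values of `λ`, a bounded amount. -/

section Rolli

variable {n : ℕ}

def rolliSum (lam : Fin n → ℤ → ℝ) (l : List (Fin n × ℤ)) : ℝ :=
  (l.map fun p => lam p.1 p.2).sum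

def rolliInv (l : List (Fin n × ℤ)) : List (Fin n × ℤ) :=
  l.reverse.map fun p => (p.1, -p.2)

@[simp]
lemma rolliSum_nil (lam : Fin n → ℤ → ℝ) : rolliSum lam [] = 0 := rfl

@[simp]
lemma rolliSum_cons (lam : Fin n → ℤ → ℝ) (p : Fin n × ℤ) (l : List (Fin n × ℤ)) :
    rolliSum lam (p :: l) = lam p.1 p.2 + rolliSum lam l := by
  simp [rolliSum]

@[simp]
lemma rolliSum_append (lam : Fin n → ℤ → ℝ) (l₁ l₂ : List (Fin n × ℤ)) :
    rolliSum lam (l₁ ++ l₂) = rolliSum lam l₁ + rolliSum lam l₂ := by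
  simp [rolliSum]

@[simp]
lemma rolliProd_nil : rolliProd ([] : List (Fin n × ℤ)) = 1 := rfl

@[simp]
lemma rolliProd_cons (p : Fin n × ℤ) (l : List (Fin n × ℤ)) :
    rolliProd (p :: l) = FreeGroup.of p.1 ^ p.2 * rolliProd l := by
  simp [rolliProd]

@[simp]
lemma rolliProd_append (l₁ l₂ : List (Fin n × ℤ)) :
    rolliProd (l₁ ++ l₂) = rolliProd l₁ * rolliProd l₂ := by
  simp [rolliProd]

lemma rolliProd_rolliInv (l : List (Fin n × ℤ)) : rolliProd (rolliInv l) = (rolliProd l)⁻¹ := by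
  induction l with
  | nil => simp [rolliInv]
  | cons p l ih => simp_all [rolliInv, zpow_neg]

lemma rolliSum_rolliInv {lam : Fin n → ℤ → ℝ} (hodd : ∀ j m, lam j (-m) = -lam j m)
    (l : List (Fin n × ℤ)) : rolliSum lam (rolliInv l) = -rolliSum lam l := by
  induction l with
  | nil => simp [rolliInv]
  | cons p l ih =>
    rw [rolliInv, List.reverse_cons, List.map_append, rolliSum_append, ← rolliInv, ih]
    simp [hodd, add_comm]

lemma rolliProd_append_merge (l₁ l₂ : List (Fin n × ℤ)) (j : Fin n) (a b : ℤ) :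
    rolliProd (l₁ ++ [(j, a)]) * rolliProd ((j, b) :: l₂) = rolliProd (l₁ ++ (j, a + b) :: l₂) := by
  simp [zpow_add, mul_assoc]

lemma rolliProd_append_cancel (l₁ l₂ : List (Fin n × ℤ)) (j : Fin n) (a : ℤ) :
    rolliProd (l₁ ++ [(j, a)]) * rolliProd ((j, -a) :: l₂) = rolliProd l₁ * rolliProd l₂ := by
  simp

lemma rolliWord_iff (l : List (Fin n × ℤ)) :
    RolliWord l ↔ (∀ p ∈ l, p.2 ≠ 0) ∧ l.IsChain fun p q => p.1 ≠ q.1 := Iff.rfl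

lemma rolliWord_nil : RolliWord ([] : List (Fin n × ℤ)) := by
  simp [rolliWord_iff]

lemma rolliWord_singleton {p : Fin n × ℤ} (hp : p.2 ≠ 0) : RolliWord [p] := by
  simp [rolliWord_iff, hp]

lemma rolliWord_cons_iff (p : Fin n × ℤ) (l : List (Fin n × ℤ)) :
    RolliWord (p :: l) ↔ p.2 ≠ 0 ∧ RolliWord l ∧ ∀ q ∈ l.head?, p.1 ≠ q.1 := by
  simp only [rolliWord_iff, List.forall_mem_cons, List.isChain_cons]
  tauto

lemma rolliWord_append_iff (l₁ l₂ : List (Fin n × ℤ)) :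
    RolliWord (l₁ ++ l₂) ↔
      RolliWord l₁ ∧ RolliWord l₂ ∧ ∀ p ∈ l₁.getLast?, ∀ q ∈ l₂.head?, p.1 ≠ q.1 := by
  simp only [rolliWord_iff, List.forall_mem_append, List.isChain_append]
  tauto

lemma RolliWord.inv {l : List (Fin n × ℤ)} (h : RolliWord l) : RolliWord (rolliInv l) := by
  rw [rolliWord_iff] at h ⊢
  refine ⟨fun p hp => ?_, ?_⟩
  · obtain ⟨q, hq, rfl⟩ := List.mem_map.mp hp
    simpa using h.1 q (List.mem_reverse.mp hq)
  · rw [rolliInv, List.isChain_map, List.isChain_reverse]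
    exact h.2.imp fun _ _ hne => Ne.symm hne

lemma RolliWord.append_of_ne {l₁ l₂ : List (Fin n × ℤ)} {p q : Fin n × ℤ}
    (h₁ : RolliWord (l₁ ++ [p])) (h₂ : RolliWord (q :: l₂)) (hpq : p.1 ≠ q.1) :
    RolliWord (l₁ ++ [p] ++ q :: l₂) := by
  rw [rolliWord_append_iff]
  simpa [h₁, h₂] using hpq

lemma RolliWord.append_merge {l₁ l₂ : List (Fin n × ℤ)} {j : Fin n} {a b : ℤ}
    (h₁ : RolliWord (l₁ ++ [(j, a)])) (h₂ : RolliWord ((j, b) :: l₂)) (hab : a + b ≠ 0) :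
    RolliWord (l₁ ++ (j, a + b) :: l₂) := by
  rw [rolliWord_append_iff] at h₁
  rw [rolliWord_cons_iff] at h₂
  rw [rolliWord_append_iff, rolliWord_cons_iff]
  simp_all

theorem exists_rolliWord_mul {lam : Fin n → ℤ → ℝ} {B : ℝ} (hB0 : 0 ≤ B)
    (hB : ∀ j m, |lam j m| ≤ B) (hodd : ∀ j m, lam j (-m) = -lam j m)
    {l₁ l₂ : List (Fin n × ℤ)} (h₁ : RolliWord l₁) (h₂ : RolliWord l₂) :
    ∃ l, RolliWord l ∧ rolliProd l = rolliProd l₁ * rolliProd l₂ ∧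
      |rolliSum lam l₁ + rolliSum lam l₂ - rolliSum lam l| ≤ 3 * B := by
  induction l₁ using List.reverseRecOn generalizing l₂ with
  | nil => exact ⟨l₂, h₂, by simp, by simpa using hB0⟩
  | append_singleton l₁ p ih =>
    rcases l₂ with _ | ⟨q, l₂⟩
    · exact ⟨l₁ ++ [p], h₁, by simp, by simpa using hB0⟩
    obtain ⟨i, a⟩ := p
    obtain ⟨j, b⟩ := q
    rcases ne_or_eq i j with hij | rfl
    · refine ⟨_, h₁.append_of_ne h₂ hij, rolliProd_append _ _, ?_⟩
      rw [rolliSum_append _ (l₁ ++ _), sub_self, abs_zero]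
      positivity
    by_cases hab : a + b = 0
    · obtain rfl : b = -a := by omega
      obtain ⟨l, hl, hprod, hsum⟩ :=
        ih ((rolliWord_append_iff _ _).mp h₁).1 ((rolliWord_cons_iff _ _).mp h₂).2.1
      refine ⟨l, hl, by rw [hprod, rolliProd_append_cancel], ?_⟩
      simpa [hodd, add_assoc, add_left_comm] using hsum
    · refine ⟨_, h₁.append_merge h₂ hab, (rolliProd_append_merge _ _ _ _ _).symm, ?_⟩
      have ha := abs_le.mp (hB i a)
      have hb := abs_le.mp (hB i b)
      have hab := abs_le.mp (hB i (a + b))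
      simp only [rolliSum_append, rolliSum_cons, rolliSum_nil]
      rw [abs_le]
      constructor <;> linarith

theorem exists_rolliWord_rolliProd_eq (g : FreeGroup (Fin n)) :
    ∃ l, RolliWord l ∧ rolliProd l = g := by
  induction g with
  | C1 => exact ⟨[], rolliWord_nil, rfl⟩
  | of j => exact ⟨[(j, 1)], rolliWord_singleton one_ne_zero, by simp⟩
  | inv_of j _ => exact ⟨[(j, -1)], rolliWord_singleton (by norm_num), by simp⟩
  | mul g h hg hh =>
    obtain ⟨l₁, h₁, rfl⟩ := hg
    obtain ⟨l₂, h₂, rfl⟩ := hh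
    obtain ⟨l, hl, hprod, -⟩ :=
      exists_rolliWord_mul (lam := fun _ _ => 0) le_rfl (by simp) (by simp) h₁ h₂
    exact ⟨l, hl, hprod⟩

end Rolli

lemma exists_forall_abs_le_of_finite {ι β : Type*} [Finite ι] {f : ι → β → ℝ}
    (h : ∀ i, ∃ B, ∀ b, |f i b| ≤ B) : ∃ B, 0 ≤ B ∧ ∀ i b, |f i b| ≤ B := by
  choose B hB using h
  obtain ⟨C, hC⟩ := (Set.finite_range B).bddAbove
  exact ⟨max C 0, le_max_right _ _,
    fun i b => (hB i b).trans ((hC ⟨i, rfl⟩).trans (le_max_left _ _))⟩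

theorem rolli_is_symmetric_qm_general {n : ℕ} (lam : Fin n → ℤ → ℝ)
    (hbd : ∀ j, ∃ B : ℝ, ∀ m : ℤ, |lam j m| ≤ B)
    (hodd : ∀ j m, lam j (-m) = -lam j m)
    (φ : FreeGroup (Fin n) → ℝ)
    (hφ : ∀ l : List (Fin n × ℤ), RolliWord l →
      φ (rolliProd l) = (l.map fun p => lam p.1 p.2).sum) :
    IsSymmetricMap φ ∧ IsQuasimorphism φ := by
  obtain ⟨B, hB0, hB⟩ := exists_forall_abs_le_of_finite hbd
  constructor
  · intro g
    obtain ⟨l, hl, rfl⟩ := exists_rolliWord_rolliProd_eq g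
    rw [← rolliProd_rolliInv, hφ _ hl.inv, hφ l hl]
    exact rolliSum_rolliInv hodd l
  · refine ⟨3 * B + 1, by linarith, fun g h => ?_⟩
    obtain ⟨l₁, h₁, rfl⟩ := exists_rolliWord_rolliProd_eq g
    obtain ⟨l₂, h₂, rfl⟩ := exists_rolliWord_rolliProd_eq h
    obtain ⟨l, hl, hprod, hsum⟩ := exists_rolliWord_mul hB0 hB hodd h₁ h₂
    rw [d1, ← hprod, hφ l₁ h₁, hφ l₂ h₂, hφ l hl]
    exact hsum.trans_lt (lt_add_one _)

/-- Example 2.2: the Rolli map `φ(x_{n₁}^{m₁}⋯x_{n_k}^{m_k}) =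
Σ_j λ_{n_j}(m_j)` (for bounded alternating `λ_j : ℤ → ℝ`) is a symmetric quasimorphism. -/
theorem rolli_is_symmetric_qm {n : ℕ} (lam : Fin n → ℤ → ℝ)
    (hbd : ∀ j, ∃ B : ℝ, ∀ m : ℤ, |lam j m| ≤ B)
    (hodd : ∀ j m, lam j (-m) = -lam j m)
    (φ : FreeGroup (Fin n) → ℝ) (h1 : φ 1 = 0)
    (hφ : ∀ l : List (Fin n × ℤ), RolliWord l →
      φ (rolliProd l) = (l.map fun p => lam p.1 p.2).sum) :
    IsSymmetricMap φ ∧ IsQuasimorphism φ :=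
  rolli_is_symmetric_qm_general lam hbd hodd φ hφ
end

section
/- Let F be a non-abelian free group on a generating set S and let α : F³ → ℝ be a 3-cocycle (δ³α = 0) satisfying α(g,h,1) = α(g,1,h) = α(1,g,h) = α(g,g⁻¹,h) = 0 for all g, h ∈ F. Define ζ(g,g',h) = Σ_{j=1}^k α(x_j, x_{j+1}⋯x_k g', h), where g = x₁⋯x_k is the reduced word representing g in the letters S ∪ S⁻¹, and η(g,h) = ζ(g,1,h). Then α(g,h,i) + δ²η(g,h,i) = 0 for all g, h, i ∈ F; that is, α = δ²ε for ε = −η. Along the way: α(g,h,i) = ζ(g,h,i) − ζ(g,1,hi) + ζ(g,1,h), and ζ(g,h,i) + ζ(h,1,i) − ζ(gh,1,i) = 0 for all g, h, i. -/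
/-! Telescoping the cocycle identity along the letters of `g` gives
`A(g,h,i) = ζ(g,h,i) − ζ(g,1,hi) + ζ(g,1,h)` for any factorisation of `g`. For the reduced
factorisation, `ζ(·,1,i)` also satisfies `ζ(xh,1,i) = A(x,h,i) + ζ(h,1,i)` for every letter `x`,
even when `x` cancels against `h`, because the normalisation turns the cocycle identity into
`A(x, x⁻¹h', i) = −A(x⁻¹, h', i)`. Iterating over the letters of `g` gives
`ζ(g,h,i) + ζ(h,1,i) = ζ(gh,1,i)`, and the two identities together say `A + δ²η = 0`. -/

open FreeGroup

section

variable {α : Type}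

theorem prod_map_mk_singleton (L : List (α × Bool)) :
    (L.map fun p => mk [p]).prod = mk L := by
  induction L with
  | nil => rfl
  | cons p L ih => rw [List.map_cons, List.prod_cons, ih, mul_mk, List.singleton_append]

variable {A : FreeGroup α → FreeGroup α → FreeGroup α → ℝ}

theorem apply_prod_eq_zetaL (hcoc : ∀ g g' h i, d3 A g g' h i = 0)
    (hone : ∀ g h, A 1 g h = 0) (l : List (FreeGroup α)) (h i : FreeGroup α) :
    A l.prod h i = zetaL A l h i - zetaL A l 1 (h * i) + zetaL A l 1 h := by
  induction l with
  | nil => simp [zetaL, hone]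
  | cons p l ih =>
    have hc := hcoc p l.prod h i
    rw [d3] at hc
    simp only [zetaL, List.prod_cons, mul_one]
    linarith

theorem apply_inv_mul_eq_neg (hcoc : ∀ g g' h i, d3 A g g' h i = 0)
    (hone : ∀ g h, A 1 g h = 0) (hinv : ∀ g h, A g g⁻¹ h = 0) (x u i : FreeGroup α) :
    A x (x⁻¹ * u) i = -A x⁻¹ u i := by
  have hc := hcoc x⁻¹ x (x⁻¹ * u) i
  have hx := hinv x⁻¹
  rw [inv_inv] at hx
  rw [d3, inv_mul_cancel, mul_inv_cancel_left, hone, hx, hx] at hc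
  linarith

variable [DecidableEq α]

theorem letters_prod (g : FreeGroup α) : (letters g).prod = g := by
  rw [letters, prod_map_mk_singleton, mk_toWord]

theorem letters_mk_of_isReduced {L : List (α × Bool)} (hL : IsReduced L) :
    letters (mk L) = L.map fun p => mk [p] := by
  rw [letters, toWord_mk, hL.reduce_eq]

theorem letters_mk_singleton_mul (p : α × Bool) (h : FreeGroup α) :
    letters (mk [p] * h) = mk [p] :: letters h ∨
      ∃ h', h = (mk [p])⁻¹ * h' ∧ letters h = (mk [p])⁻¹ :: letters h' := by
  by_cases hp : IsReduced (p :: h.toWord)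
  · left
    rw [← mk_toWord (x := h), mul_mk, List.singleton_append, letters_mk_of_isReduced hp,
      List.map_cons, mk_toWord, letters]
  · right
    obtain ⟨q, t, ht⟩ : ∃ q t, h.toWord = q :: t := by
      cases hw : h.toWord with
      | nil => exact absurd (hw ▸ IsReduced.singleton) hp
      | cons q t => exact ⟨q, t, rfl⟩
    have hqt : IsReduced (q :: t) := ht ▸ isReduced_toWord
    have hq : q = (p.1, !p.2) := by
      rw [ht, isReduced_cons_cons] at hp
      have hpq : p.1 = q.1 ∧ p.2 ≠ q.2 := by tauto
      ext
      · exact hpq.1.symm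
      · exact Bool.eq_not.mpr hpq.2.symm
    have hinv : (mk [p])⁻¹ = mk [q] := by rw [inv_mk, hq]; rfl
    refine ⟨mk t, ?_, ?_⟩
    · rw [hinv, mul_mk, List.singleton_append, ← ht, mk_toWord]
    · rw [hinv, letters, ht, List.map_cons,
        letters_mk_of_isReduced (hqt.infix (List.suffix_cons q t).isInfix)]

theorem zetaL_letters_mk_singleton_mul (hcoc : ∀ g g' h i, d3 A g g' h i = 0)
    (hone : ∀ g h, A 1 g h = 0) (hinv : ∀ g h, A g g⁻¹ h = 0)
    (p : α × Bool) (h i : FreeGroup α) :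
    zetaL A (letters (mk [p] * h)) 1 i = A (mk [p]) h i + zetaL A (letters h) 1 i := by
  rcases letters_mk_singleton_mul p h with hprepend | ⟨h', rfl, hcancel⟩
  · rw [hprepend, zetaL, letters_prod, mul_one]
  · rw [hcancel, zetaL, letters_prod, mul_one, mul_inv_cancel_left,
      apply_inv_mul_eq_neg hcoc hone hinv]
    ring

theorem zetaL_letters_add_zetaL_letters (hcoc : ∀ g g' h i, d3 A g g' h i = 0)
    (hone : ∀ g h, A 1 g h = 0) (hinv : ∀ g h, A g g⁻¹ h = 0) (g h i : FreeGroup α) :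
    zetaL A (letters g) h i + zetaL A (letters h) 1 i = zetaL A (letters (g * h)) 1 i := by
  suffices ∀ L : List (α × Bool), zetaL A (L.map fun p => mk [p]) h i +
      zetaL A (letters h) 1 i = zetaL A (letters (mk L * h)) 1 i by
    simpa only [letters, mk_toWord] using this g.toWord
  intro L
  induction L with
  | nil => simp [zetaL, ← one_eq_mk]
  | cons p L ih =>
    have hmk : mk (p :: L) * h = mk [p] * (mk L * h) := by
      rw [← mul_assoc, mul_mk, List.singleton_append]
    rw [List.map_cons, zetaL, add_assoc, ih, prod_map_mk_singleton, hmk,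
      zetaL_letters_mk_singleton_mul hcoc hone hinv]

end

theorem three_cocycle_coboundary_general {α : Type} [DecidableEq α]
    (A : FreeGroup α → FreeGroup α → FreeGroup α → ℝ)
    (hcoc : ∀ g g' h i : FreeGroup α, d3 A g g' h i = 0)
    (hnorm : ∀ g h : FreeGroup α,
      A g h 1 = 0 ∧ A g 1 h = 0 ∧ A 1 g h = 0 ∧ A g g⁻¹ h = 0) :
    (∀ g h i : FreeGroup α,
      A g h i + d2 (fun a b => zetaL A (letters a) 1 b) g h i = 0) ∧
    (∀ g h i : FreeGroup α,
      A g h i = zetaL A (letters g) h i - zetaL A (letters g) 1 (h * i) +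
        zetaL A (letters g) 1 h) ∧
    (∀ g h i : FreeGroup α,
      zetaL A (letters g) h i + zetaL A (letters h) 1 i -
        zetaL A (letters (g * h)) 1 i = 0) := by
  have hone : ∀ g h, A 1 g h = 0 := fun g h => (hnorm g h).2.2.1
  have hinv : ∀ g h, A g g⁻¹ h = 0 := fun g h => (hnorm g h).2.2.2
  have hζ : ∀ g h i, A g h i = zetaL A (letters g) h i - zetaL A (letters g) 1 (h * i) +
      zetaL A (letters g) 1 h := fun g h i => by
    simpa only [letters_prod] using apply_prod_eq_zetaL hcoc hone (letters g) h i
  have hη := zetaL_letters_add_zetaL_letters hcoc hone hinv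
  refine ⟨fun g h i => ?_, hζ, fun g h i => sub_eq_zero.mpr (hη g h i)⟩
  rw [d2, ← hη g h i, hζ g h i]
  ring

/-- Subsection 4.2: for a `3`-cocycle `A` with the normalization
`A(g,h,1) = A(g,1,h) = A(1,g,h) = A(g,g⁻¹,h) = 0`, setting
`ζ(g,g',h) = Σ_j A(x_j, x_{j+1}⋯x_k g', h)` over the letters of `g` and
`η(g,h) = ζ(g,1,h)`, one has `A + δ²η = 0`, i.e. `A = δ²(−η)`; along the way,
`A(g,h,i) = ζ(g,h,i) − ζ(g,1,hi) + ζ(g,1,h)` and `ζ(g,h,i) + ζ(h,1,i) − ζ(gh,1,i) = 0`. -/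
theorem three_cocycle_coboundary {α : Type} [Fintype α] [DecidableEq α]
    (hab : ∃ a b : α, a ≠ b)
    (A : FreeGroup α → FreeGroup α → FreeGroup α → ℝ)
    (hcoc : ∀ g g' h i : FreeGroup α, d3 A g g' h i = 0)
    (hnorm : ∀ g h : FreeGroup α,
      A g h 1 = 0 ∧ A g 1 h = 0 ∧ A 1 g h = 0 ∧ A g g⁻¹ h = 0) :
    (∀ g h i : FreeGroup α,
      A g h i + d2 (fun a b => zetaL A (letters a) 1 b) g h i = 0) ∧
    (∀ g h i : FreeGroup α,
      A g h i = zetaL A (letters g) h i - zetaL A (letters g) 1 (h * i) +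
        zetaL A (letters g) 1 h) ∧
    (∀ g h i : FreeGroup α,
      zetaL A (letters g) h i + zetaL A (letters h) 1 i -
        zetaL A (letters (g * h)) 1 i = 0) :=
  three_cocycle_coboundary_general A hcoc hnorm
end
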